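/- arXiv:math/0311438 — 7 statements merged into one kernel-verified Lean document; each statement's English description precedes it below -/
import Mathlib

section
/- Let W be a vector lattice carrying a faithful positive linear functional ψ (i.e., ψ(a) > 0 for all a in W₊ \ {0}). Suppose W is monotone sequentially complete (every upper bounded increasing sequence has a supremum). Let J be a nonempty upward directed subset of W that is upper bounded. If (jₙ) is an increasing sequence in J with supₙ ψ(jₙ) = sup_{j∈J} ψ(j), then supₙ jₙ exists in W and equals the supremum of J in W. -/
/-!
Let `s = supₙ jₙ`, which exists by monotone sequential completeness, and let `x ∈ J`. For each `n`
pick `k ∈ J` above `x` and `jₙ`; then `(x - s)⁺ ≤ (x - jₙ)⁺ = x ⊔ jₙ - jₙ ≤ k - jₙ`, so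
`ψ (x - s)⁺ ≤ sup ψ(J) - ψ jₙ`. Letting `n → ∞` gives `ψ (x - s)⁺ ≤ 0`, hence `(x - s)⁺ = 0` by
faithfulness, i.e. `x ≤ s`. So `s` bounds `J`, and it is least because every `jₙ` lies in `J`.
-/

section FaithfulFunctional

variable {W F : Type*} [Lattice W] [AddCommGroup W] [FunLike F W ℝ] {ψ : F}

theorem nonpos_of_map_posPart_nonpos (hψ : ∀ a : W, 0 ≤ a → a ≠ 0 → 0 < ψ a) {a : W}
    (ha : ψ a⁺ ≤ 0) : a ≤ 0 := by
  by_contra h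
  exact (hψ a⁺ (posPart_nonneg a) (by rwa [Ne, posPart_eq_zero])).not_ge ha

variable [AddLeftMono W] [AddMonoidHomClass F W ℝ]

theorem monotone_of_faithful (hψ : ∀ a : W, 0 ≤ a → a ≠ 0 → 0 < ψ a) : Monotone ψ := by
  intro a b hab
  rcases eq_or_ne (b - a) 0 with h | h
  · rw [sub_eq_zero.mp h]
  · have := hψ (b - a) (sub_nonneg.mpr hab) h
    rw [map_sub] at this
    linarith

theorem posPart_sub_le_sup_sub {x y s : W} (hys : y ≤ s) : (x - s)⁺ ≤ x ⊔ y - y := by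
  rw [sup_eq_add_posPart_sub, add_sub_cancel_left]
  exact posPart_mono (sub_le_sub_left hys x)

theorem DirectedOn.map_posPart_sub_le_csSup_sub {J : Set W} (hJ : DirectedOn (· ≤ ·) J)
    (hψ : Monotone ψ) (hbdd : BddAbove (ψ '' J)) {x y s : W} (hx : x ∈ J) (hy : y ∈ J)
    (hys : y ≤ s) : ψ (x - s)⁺ ≤ sSup (ψ '' J) - ψ y := by
  obtain ⟨k, hk, hxk, hyk⟩ := hJ x hx y hy
  have hψk : ψ k ≤ sSup (ψ '' J) := le_csSup hbdd ⟨k, hk, rfl⟩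
  calc ψ (x - s)⁺ ≤ ψ (x ⊔ y - y) := hψ (posPart_sub_le_sup_sub hys)
    _ ≤ ψ (k - y) := hψ (sub_le_sub_right (sup_le hxk hyk) y)
    _ = ψ k - ψ y := map_sub ψ k y
    _ ≤ sSup (ψ '' J) - ψ y := by linarith

theorem DirectedOn.mem_upperBounds_of_iSup_map_eq (hψ : ∀ a : W, 0 ≤ a → a ≠ 0 → 0 < ψ a)
    {J : Set W} (hJ : DirectedOn (· ≤ ·) J) (hbdd : BddAbove J) {j : ℕ → W} (hjJ : ∀ n, j n ∈ J)
    (hsup : ⨆ n, ψ (j n) = sSup (ψ '' J)) {s : W} (hs : s ∈ upperBounds (Set.range j)) :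
    s ∈ upperBounds J := by
  intro x hx
  have hmono := monotone_of_faithful hψ
  have hbddψ := hmono.map_bddAbove hbdd
  have hbound : ∀ n, ψ (j n) ≤ sSup (ψ '' J) - ψ (x - s)⁺ := fun n ↦ by
    linarith [hJ.map_posPart_sub_le_csSup_sub hmono hbddψ hx (hjJ n) (hs ⟨n, rfl⟩)]
  have hle : ⨆ n, ψ (j n) ≤ sSup (ψ '' J) - ψ (x - s)⁺ := ciSup_le hbound
  rw [hsup] at hle
  exact sub_nonpos.mp (nonpos_of_map_posPart_nonpos hψ (by linarith))

end FaithfulFunctional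

theorem stmt_0_general {W : Type*} [Lattice W] [AddCommGroup W] [Module ℝ W]
    [CovariantClass W W (· + ·) (· ≤ ·)]
    (ψ : W →ₗ[ℝ] ℝ)
    (hψfaith : ∀ a : W, 0 ≤ a → a ≠ 0 → 0 < ψ a)
    (hseq : ∀ f : ℕ → W, Monotone f → BddAbove (Set.range f) →
      ∃ s, IsLUB (Set.range f) s)
    (J : Set W) (hJdir : DirectedOn (· ≤ ·) J)
    (hJbdd : BddAbove J)
    (j : ℕ → W) (hjJ : ∀ n, j n ∈ J) (hjmono : Monotone j)
    (hsup : (⨆ n, ψ (j n)) = sSup (ψ '' J)) :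
    ∃ s : W, IsLUB (Set.range j) s ∧ IsLUB J s := by
  have hrange : Set.range j ⊆ J := Set.range_subset_iff.mpr hjJ
  obtain ⟨s, hs⟩ := hseq j hjmono (hJbdd.mono hrange)
  have hJs : J ⊆ Set.Iic s := hJdir.mem_upperBounds_of_iSup_map_eq hψfaith hJbdd hjJ hsup hs.1
  exact ⟨s, hs, hs.of_subset_of_superset isLUB_Iic hrange hJs⟩

/-- Monotone selection principle, core computation: if `(jₙ)` is an increasing
sequence in a nonempty upward directed upper bounded set `J` in a monotone
sequentially complete vector lattice with faithful positive linear functional `ψ`,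
and `supₙ ψ(jₙ) = sup_{j∈J} ψ(j)`, then `supₙ jₙ` exists and equals `sup J`. -/
theorem stmt_0 {W : Type*} [Lattice W] [AddCommGroup W] [Module ℝ W]
    [CovariantClass W W (· + ·) (· ≤ ·)] [PosSMulMono ℝ W]
    (ψ : W →ₗ[ℝ] ℝ)
    (hψpos : ∀ a : W, 0 ≤ a → 0 ≤ ψ a)
    (hψfaith : ∀ a : W, 0 ≤ a → a ≠ 0 → 0 < ψ a)
    (hseq : ∀ f : ℕ → W, Monotone f → BddAbove (Set.range f) →
      ∃ s, IsLUB (Set.range f) s)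
    (J : Set W) (hJne : J.Nonempty) (hJdir : DirectedOn (· ≤ ·) J)
    (hJbdd : BddAbove J)
    (j : ℕ → W) (hjJ : ∀ n, j n ∈ J) (hjmono : Monotone j)
    (hsup : (⨆ n, ψ (j n)) = sSup (ψ '' J)) :
    ∃ s : W, IsLUB (Set.range j) s ∧ IsLUB J s :=
  stmt_0_general ψ hψfaith hseq J hJdir hJbdd j hjJ hjmono hsup
end

section
/- Let W be a vector lattice carrying a faithful positive linear functional. If W is monotone sequentially complete, then W is monotone complete: every nonempty upper bounded upward directed subset of W has a supremum in W. -/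
open Filter Topology

/-- A monotone sequentially complete vector lattice carrying a faithful positive
linear functional is monotone complete. -/
theorem stmt_1 {W : Type*} [Lattice W] [AddCommGroup W] [Module ℝ W]
    [CovariantClass W W (· + ·) (· ≤ ·)] [PosSMulMono ℝ W]
    (ψ : W →ₗ[ℝ] ℝ)
    (hψpos : ∀ a : W, 0 ≤ a → 0 ≤ ψ a)
    (hψfaith : ∀ a : W, 0 ≤ a → a ≠ 0 → 0 < ψ a)
    (hseq : ∀ f : ℕ → W, Monotone f → BddAbove (Set.range f) →
      ∃ s, IsLUB (Set.range f) s) :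
    ∀ J : Set W, J.Nonempty → DirectedOn (· ≤ ·) J → BddAbove J →
      ∃ s : W, IsLUB J s := by
  intro J hJne hJdir hJbdd
  obtain ⟨b, hb⟩ := hJbdd
  have hmono : ∀ x y : W, x ≤ y → ψ x ≤ ψ y := by
    intro x y h
    have h1 : (0:ℝ) ≤ ψ (y - x) := hψpos _ (sub_nonneg.2 h)
    rw [map_sub] at h1; linarith
  have hSne : (ψ '' J).Nonempty := hJne.image ψ
  have hSbdd : BddAbove (ψ '' J) := by
    refine ⟨ψ b, ?_⟩
    rintro _ ⟨x, hx, rfl⟩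
    exact hmono _ _ (hb hx)
  set M := sSup (ψ '' J) with hM
  obtain ⟨u, humono, hulim, humem⟩ := exists_seq_tendsto_sSup hSne hSbdd
  choose a haJ haψ using fun n => humem n
  -- build a monotone sequence f in J with a n ≤ f n
  choose g hgJ hgle hgle' using fun (x : W) (hx : x ∈ J) (n : ℕ) =>
    hJdir x hx (a n) (haJ n)
  let F : ℕ → {x : W // x ∈ J} := fun n =>
    Nat.rec ⟨a 0, haJ 0⟩ (fun n p => ⟨g p.1 p.2 (n+1), hgJ p.1 p.2 (n+1)⟩) n
  set f : ℕ → W := fun n => (F n).1 with hf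
  have hfJ : ∀ n, f n ∈ J := fun n => (F n).2
  have hfmono : Monotone f := by
    apply monotone_nat_of_le_succ
    intro n
    exact hgle (F n).1 (F n).2 (n+1)
  have hfa : ∀ n, a n ≤ f n := by
    intro n
    cases n with
    | zero => exact le_refl _
    | succ m => exact hgle' (F m).1 (F m).2 (m+1)
  have hfψ : ∀ n, u n ≤ ψ (f n) := fun n => (haψ n) ▸ hmono _ _ (hfa n)
  have hfbdd : BddAbove (Set.range f) := by
    refine ⟨b, ?_⟩
    rintro _ ⟨n, rfl⟩
    exact hb (hfJ n)
  obtain ⟨s, hs⟩ := hseq f hfmono hfbdd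
  refine ⟨s, ?_, ?_⟩
  · -- s is an upper bound of J
    intro x hx
    -- consider h n = -((x - f n) ⊔ 0), increasing, bounded above by 0
    set h : ℕ → W := fun n => -((x - f n) ⊔ 0) with hh
    have hhmono : Monotone h := by
      intro m n hmn
      simp only [hh, neg_le_neg_iff]
      exact sup_le (le_sup_of_le_left (by
        have := hfmono hmn; exact sub_le_sub_left this x)) le_sup_right
    have hhbdd : BddAbove (Set.range h) := by
      refine ⟨0, ?_⟩
      rintro _ ⟨n, rfl⟩
      simp only [hh, neg_nonpos]
      exact le_sup_right
    obtain ⟨s', hs'⟩ := hseq h hhmono hhbdd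
    have hs'0 : s' ≤ 0 := hs'.2 (by rintro _ ⟨n, rfl⟩; simp only [hh, neg_nonpos]; exact le_sup_right)
    -- ψ(-s') ≤ M - u n for all n
    have hkey : ∀ n, ψ (-s') ≤ M - u n := by
      intro n
      have h1 : -s' ≤ (x - f n) ⊔ 0 := by
        have := hs'.1 ⟨n, rfl⟩
        simpa [hh] using neg_le_neg_iff.2 this
      have h2 : (x - f n) ⊔ 0 = x ⊔ f n - f n := by
        rw [sup_sub, sub_self]
      obtain ⟨c, hcJ, hxc, hfc⟩ := hJdir x hx (f n) (hfJ n)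
      have h3 : ψ (x ⊔ f n) ≤ M := le_trans (hmono _ _ (sup_le hxc hfc))
        (le_csSup hSbdd ⟨c, hcJ, rfl⟩)
      have h4 : ψ (-s') ≤ ψ (x ⊔ f n) - ψ (f n) := by
        have := hmono _ _ (h2 ▸ h1)
        rwa [map_sub] at this
      have := hfψ n
      linarith
    have hlim : Tendsto (fun n => M - u n) atTop (𝓝 0) := by
      have := hulim.const_sub M
      simpa [← hM] using this
    have hψs' : ψ (-s') ≤ 0 := ge_of_tendsto' hlim hkey
    have hns' : 0 ≤ -s' := neg_nonneg.2 hs'0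
    have hs'eq : -s' = 0 := by
      by_contra hne
      exact absurd (hψfaith _ hns' hne) (not_lt.2 hψs')
    have hs'eq' : s' = 0 := by simpa using hs'eq
    -- -((x - s) ⊔ 0) is an upper bound of range h
    have hub : -((x - s) ⊔ 0) ∈ upperBounds (Set.range h) := by
      rintro _ ⟨n, rfl⟩
      simp only [hh, neg_le_neg_iff]
      refine sup_le (le_sup_of_le_left ?_) le_sup_right
      exact sub_le_sub_left (hs.1 ⟨n, rfl⟩) x
    have h5 : s' ≤ -((x - s) ⊔ 0) := hs'.2 hub
    rw [hs'eq'] at h5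
    have h6 : (x - s) ⊔ 0 ≤ 0 := neg_nonneg.mp h5
    have h7 : x - s ≤ 0 := le_trans le_sup_left h6
    exact sub_nonpos.mp h7
  · -- least: any upper bound of J bounds s
    intro v hv
    exact hs.2 (by rintro _ ⟨n, rfl⟩; exact hv (hfJ n))
end

section
/- Let W be a monotone sequentially complete vector lattice with a faithful positive linear functional ψ, and let J be a nonempty upward directed upper bounded subset of W. Then there exists an increasing sequence (jₙ) of elements of J such that supₙ jₙ = sup J (in particular both suprema exist). -/
/-- Monotone selection principle: in a monotone sequentially complete vector
lattice with a faithful positive linear functional, every nonempty upward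
directed upper bounded set `J` admits an increasing sequence in `J` whose
supremum exists and equals the supremum of `J`. -/
theorem stmt_2 {W : Type*} [Lattice W] [AddCommGroup W] [Module ℝ W]
    [CovariantClass W W (· + ·) (· ≤ ·)] [PosSMulMono ℝ W]
    (ψ : W →ₗ[ℝ] ℝ)
    (hψpos : ∀ a : W, 0 ≤ a → 0 ≤ ψ a)
    (hψfaith : ∀ a : W, 0 ≤ a → a ≠ 0 → 0 < ψ a)
    (hseq : ∀ f : ℕ → W, Monotone f → BddAbove (Set.range f) →
      ∃ s, IsLUB (Set.range f) s)
    (J : Set W) (hJne : J.Nonempty) (hJdir : DirectedOn (· ≤ ·) J)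
    (hJbdd : BddAbove J) :
    ∃ j : ℕ → W, Monotone j ∧ (∀ n, j n ∈ J) ∧
      ∃ s : W, IsLUB (Set.range j) s ∧ IsLUB J s := by
  obtain ⟨b, hb⟩ := hJbdd
  have hmono : ∀ x y : W, x ≤ y → ψ x ≤ ψ y := by
    intro x y hxy
    have := hψpos (y - x) (sub_nonneg.mpr hxy)
    have : ψ y - ψ x = ψ (y - x) := by rw [map_sub]
    linarith
  set S := ψ '' J with hS
  have hSne : S.Nonempty := hJne.image ψ
  have hSbdd : BddAbove S := by
    refine ⟨ψ b, ?_⟩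
    rintro _ ⟨x, hx, rfl⟩
    exact hmono _ _ (hb hx)
  set M := sSup S with hM
  have hle : ∀ x ∈ J, ψ x ≤ M := fun x hx => le_csSup hSbdd ⟨x, hx, rfl⟩
  have hg : ∀ n : ℕ, ∃ x ∈ J, M - 1 / (n + 1) < ψ x := by
    intro n
    have hpos : (0 : ℝ) < 1 / (n + 1) := by positivity
    obtain ⟨_, ⟨x, hx, rfl⟩, hlt⟩ := exists_lt_of_lt_csSup hSne (by linarith : M - 1/(n+1) < M)
    exact ⟨x, hx, hlt⟩
  choose g hgJ hgψ using hg
  have key : ∀ (p : {w // w ∈ J}) (n : ℕ),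
      ∃ q : {w // w ∈ J}, p.1 ≤ q.1 ∧ g n ≤ q.1 := by
    rintro ⟨w, hw⟩ n
    obtain ⟨z, hz, h1, h2⟩ := hJdir w hw (g n) (hgJ n)
    exact ⟨⟨z, hz⟩, h1, h2⟩
  choose F hF1 hF2 using key
  let jj : ℕ → {w // w ∈ J} := fun n =>
    Nat.rec ⟨g 0, hgJ 0⟩ (fun n p => F p (n + 1)) n
  set j : ℕ → W := fun n => (jj n).1 with hj
  have hjJ : ∀ n, j n ∈ J := fun n => (jj n).2
  have hjmono : Monotone j := by
    apply monotone_nat_of_le_succ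
    intro n
    exact hF1 (jj n) (n + 1)
  have hgj : ∀ n, g n ≤ j n := by
    intro n
    cases n with
    | zero => exact le_refl _
    | succ m => exact hF2 (jj m) (m + 1)
  have hjψ : ∀ n : ℕ, M - 1 / (n + 1) < ψ (j n) :=
    fun n => lt_of_lt_of_le (hgψ n) (hmono _ _ (hgj n))
  have hbddr : BddAbove (Set.range j) := by
    refine ⟨b, ?_⟩
    rintro _ ⟨n, rfl⟩
    exact hb (hjJ n)
  obtain ⟨s, hs⟩ := hseq j hjmono hbddr
  have hjs : ∀ n, j n ≤ s := fun n => hs.1 ⟨n, rfl⟩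
  have hub : ∀ x ∈ J, x ≤ s := by
    intro x hx
    set a := x ⊔ s - s with ha
    have ha0 : 0 ≤ a := sub_nonneg.mpr le_sup_right
    have hψa : ∀ n : ℕ, ψ a < 1 / (n + 1) := by
      intro n
      have h1 : x ⊔ s ≤ (x ⊔ j n) + (s - j n) := by
        apply sup_le
        · have : (0:W) ≤ s - j n := sub_nonneg.mpr (hjs n)
          calc x ≤ x ⊔ j n := le_sup_left
            _ ≤ (x ⊔ j n) + (s - j n) := le_add_of_nonneg_right this
        · calc s = j n + (s - j n) := by abel
            _ ≤ (x ⊔ j n) + (s - j n) := add_le_add le_sup_right le_rfl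
      have h2 : a ≤ x ⊔ j n - j n := by
        rw [ha]
        have := sub_le_sub_right h1 s
        calc x ⊔ s - s ≤ (x ⊔ j n) + (s - j n) - s := this
          _ = x ⊔ j n - j n := by abel
      have h3 : ψ a ≤ ψ (x ⊔ j n) - ψ (j n) :=
        calc ψ a ≤ ψ (x ⊔ j n - j n) := hmono _ _ h2
          _ = ψ (x ⊔ j n) - ψ (j n) := map_sub ψ _ _
      obtain ⟨z, hz, hxz, hjz⟩ := hJdir x hx (j n) (hjJ n)
      have h4 : ψ (x ⊔ j n) ≤ M := le_trans (hmono _ _ (sup_le hxz hjz)) (hle z hz)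
      have h5 := hjψ n
      linarith
    have hψa0 : ψ a = 0 := by
      rcases lt_or_eq_of_le (hψpos a ha0) with h | h
      · obtain ⟨n, hn⟩ := exists_nat_one_div_lt h
        exact absurd (hψa n) (by push_cast; linarith)
      · exact h.symm
    have haz : a = 0 := by
      by_contra hne
      exact absurd hψa0 (ne_of_gt (hψfaith a ha0 hne))
    have hxs : x ⊔ s = s := sub_eq_zero.mp haz
    exact le_sup_left.trans hxs.le
  refine ⟨j, hjmono, hjJ, s, hs, ⟨fun x hx => hub x hx, fun u hu => ?_⟩⟩
  apply hs.2
  rintro _ ⟨n, rfl⟩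
  exact hu (hjJ n)
end

section
/- Let W be a monotone sequentially complete vector lattice carrying a faithful positive linear functional, and let V be a linear subspace of W that is monotone sequentially closed in W (i.e., V contains the supremum in W of every increasing sequence in V that is bounded above in W). Then V is monotone closed in W: for every nonempty upward directed subset J of V bounded above in W, the supremum of J in W exists and belongs to V. -/
/-!
Let `α = sup ψ(J)`. Since `J` is directed, it contains an increasing sequence `fₙ` with
`ψ(fₙ) → α`; its supremum `s` exists and lies in `V` by sequential closedness. For `j ∈ J`
pick `k ∈ J` above `j` and `fₙ`; then `(j - s)⁺ ≤ (j - fₙ)⁺ = j ⊔ fₙ - fₙ ≤ k - fₙ`, so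
`ψ((j - s)⁺) ≤ α - ψ(fₙ) → 0`, and faithfulness forces `j ≤ s`. Hence `s = sup J`.
-/

open Set

theorem monotone_of_map_pos {W F : Type*} [Lattice W] [AddCommGroup W] [AddLeftMono W]
    [FunLike F W ℝ] [AddMonoidHomClass F W ℝ] (ψ : F) (hψ : ∀ a : W, 0 ≤ a → a ≠ 0 → 0 < ψ a) :
    Monotone ψ := by
  intro a b hab
  have hba : 0 ≤ ψ (b - a) := by
    rcases eq_or_ne (b - a) 0 with h | h
    · rw [h, map_zero]
    · exact (hψ _ (sub_nonneg.2 hab) h).le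
  rw [map_sub] at hba
  linarith

theorem nonpos_of_forall_map_posPart_le {W F : Type*} [Lattice W] [AddCommGroup W]
    [FunLike F W ℝ] (ψ : F) (hψ : ∀ a : W, 0 ≤ a → a ≠ 0 → 0 < ψ a)
    {a : W} (ha : ∀ ε > 0, ψ a⁺ ≤ ε) : a ≤ 0 := by
  rw [← posPart_eq_zero]
  by_contra h
  have hpos := hψ _ (posPart_nonneg a) h
  linarith [ha _ (half_pos hpos)]

namespace DirectedOn

theorem exists_monotone_seq_ge {α : Type*} [Preorder α] {J : Set α}
    (hJ : DirectedOn (· ≤ ·) J) (u : ℕ → α) (hu : ∀ n, u n ∈ J) :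
    ∃ f : ℕ → α, (∀ n, f n ∈ J) ∧ Monotone f ∧ ∀ n, u n ≤ f n := by
  have hstep : ∀ (x : J) (n : ℕ), ∃ y : J, (x : α) ≤ y ∧ u n ≤ y := fun x n => by
    obtain ⟨y, hy, hxy, hny⟩ := hJ x x.2 (u n) (hu n)
    exact ⟨⟨y, hy⟩, hxy, hny⟩
  choose next hnext_ge hnext_ge_u using hstep
  let f : ℕ → J := fun n => Nat.rec ⟨u 0, hu 0⟩ (fun n x => next x (n + 1)) n
  refine ⟨fun n => (f n).1, fun n => (f n).2, ?_, ?_⟩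
  · exact monotone_nat_of_le_succ fun n => hnext_ge (f n) (n + 1)
  rintro (_ | n)
  · exact le_rfl
  · exact hnext_ge_u _ _

theorem exists_monotone_seq_csSup_image_sub_lt {α : Type*} [Preorder α] {J : Set α}
    (hJ : DirectedOn (· ≤ ·) J) (hJne : J.Nonempty) {φ : α → ℝ} (hφ : Monotone φ) :
    ∃ f : ℕ → α, (∀ n, f n ∈ J) ∧ Monotone f ∧ ∀ ε > 0, ∃ n, sSup (φ '' J) - ε < φ (f n) := by
  have happrox : ∀ n : ℕ, ∃ x ∈ J, sSup (φ '' J) - 1 / (n + 1) < φ x := fun n => by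
    obtain ⟨_, ⟨x, hx, rfl⟩, hlt⟩ :=
      exists_lt_of_lt_csSup (hJne.image φ) (sub_lt_self _ Nat.one_div_pos_of_nat)
    exact ⟨x, hx, hlt⟩
  choose u hu hu_lt using happrox
  obtain ⟨f, hfJ, hf, hfu⟩ := hJ.exists_monotone_seq_ge u hu
  refine ⟨f, hfJ, hf, fun ε hε => ?_⟩
  obtain ⟨n, hn⟩ := exists_nat_one_div_lt hε
  exact ⟨n, by linarith [hu_lt n, hφ (hfu n)]⟩

theorem mem_upperBounds_of_csSup_image_sub_lt {W F : Type*} [Lattice W] [AddCommGroup W]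
    [AddLeftMono W] [FunLike F W ℝ] [AddMonoidHomClass F W ℝ] (ψ : F)
    (hψ : ∀ a : W, 0 ≤ a → a ≠ 0 → 0 < ψ a) {J : Set W} (hJ : DirectedOn (· ≤ ·) J)
    (hbdd : BddAbove (ψ '' J)) {f : ℕ → W} (hfJ : ∀ n, f n ∈ J)
    (hf : ∀ ε > 0, ∃ n, sSup (ψ '' J) - ε < ψ (f n)) {s : W} (hs : s ∈ upperBounds (range f)) :
    s ∈ upperBounds J := by
  intro j hj
  rw [← sub_nonpos]
  refine nonpos_of_forall_map_posPart_le ψ hψ fun ε hε => ?_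
  obtain ⟨n, hn⟩ := hf ε hε
  obtain ⟨k, hk, hfk, hjk⟩ := hJ (f n) (hfJ n) j hj
  have hψ_mono := monotone_of_map_pos ψ hψ
  have hle : (j - s)⁺ ≤ k - f n :=
    calc (j - s)⁺ ≤ (j - f n)⁺ := posPart_mono (sub_le_sub_left (hs ⟨n, rfl⟩) j)
      _ = j ⊔ f n - f n := by rw [posPart_def, sup_sub, sub_self]
      _ ≤ k - f n := sub_le_sub_right (sup_le hjk hfk) _
  have hk_le : ψ k ≤ sSup (ψ '' J) := le_csSup hbdd ⟨k, hk, rfl⟩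
  linarith [hψ_mono hle, map_sub ψ k (f n)]

end DirectedOn

theorem stmt_3_general {W : Type*} [Lattice W] [AddCommGroup W] [Module ℝ W]
    [CovariantClass W W (· + ·) (· ≤ ·)]
    (ψ : W →ₗ[ℝ] ℝ)
    (hψfaith : ∀ a : W, 0 ≤ a → a ≠ 0 → 0 < ψ a)
    (hseq : ∀ f : ℕ → W, Monotone f → BddAbove (Set.range f) →
      ∃ s, IsLUB (Set.range f) s)
    (V : Submodule ℝ W)
    (hVclosed : ∀ f : ℕ → W, (∀ n, f n ∈ V) → Monotone f →
      BddAbove (Set.range f) → ∀ s : W, IsLUB (Set.range f) s → s ∈ V) :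
    ∀ J : Set W, J ⊆ V → J.Nonempty → DirectedOn (· ≤ ·) J → BddAbove J →
      ∃ s : W, IsLUB J s ∧ s ∈ V := by
  intro J hJV hJne hJdir ⟨b, hb⟩
  have hψ_mono := monotone_of_map_pos ψ hψfaith
  have hbdd : BddAbove (ψ '' J) := hψ_mono.map_bddAbove ⟨b, hb⟩
  obtain ⟨f, hfJ, hf, hf_approx⟩ := hJdir.exists_monotone_seq_csSup_image_sub_lt hJne hψ_mono
  have hf_bdd : BddAbove (range f) := ⟨b, forall_mem_range.2 fun n => hb (hfJ n)⟩
  obtain ⟨s, hs⟩ := hseq f hf hf_bdd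
  refine ⟨s, ⟨?_, fun c hc => hs.2 (forall_mem_range.2 fun n => hc (hfJ n))⟩,
    hVclosed f (fun n => hJV (hfJ n)) hf hf_bdd s hs⟩
  exact hJdir.mem_upperBounds_of_csSup_image_sub_lt ψ hψfaith hbdd hfJ hf_approx hs.1

/-- In a monotone sequentially complete vector lattice with a faithful positive
linear functional, a monotone sequentially closed linear subspace is monotone
closed. -/
theorem stmt_3 {W : Type*} [Lattice W] [AddCommGroup W] [Module ℝ W]
    [CovariantClass W W (· + ·) (· ≤ ·)] [PosSMulMono ℝ W]
    (ψ : W →ₗ[ℝ] ℝ)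
    (hψpos : ∀ a : W, 0 ≤ a → 0 ≤ ψ a)
    (hψfaith : ∀ a : W, 0 ≤ a → a ≠ 0 → 0 < ψ a)
    (hseq : ∀ f : ℕ → W, Monotone f → BddAbove (Set.range f) →
      ∃ s, IsLUB (Set.range f) s)
    (V : Submodule ℝ W)
    (hVclosed : ∀ f : ℕ → W, (∀ n, f n ∈ V) → Monotone f →
      BddAbove (Set.range f) → ∀ s : W, IsLUB (Set.range f) s → s ∈ V) :
    ∀ J : Set W, J ⊆ V → J.Nonempty → DirectedOn (· ≤ ·) J → BddAbove J →
      ∃ s : W, IsLUB J s ∧ s ∈ V :=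
  stmt_3_general ψ hψfaith hseq V hVclosed
end

section
/- Let φ : A → B be a positive linear map between monotone complete ordered vector spaces, where A is a vector lattice admitting a faithful positive linear functional. If φ is sequentially normal (φ(supₙ jₙ) = supₙ φ(jₙ) for every bounded-above increasing sequence (jₙ) in A), then φ is normal: for every nonempty upper bounded upward directed subset J of A, φ(sup J) = sup_{j∈J} φ(j). -/
/-- A sequentially normal positive linear map from a monotone complete vector
lattice admitting a faithful positive linear functional into a monotone complete
ordered vector space is normal. -/
theorem stmt_4 {A B : Type*}
    [Lattice A] [AddCommGroup A] [Module ℝ A]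
    [CovariantClass A A (· + ·) (· ≤ ·)] [PosSMulMono ℝ A]
    [AddCommGroup B] [PartialOrder B] [IsOrderedAddMonoid B] [Module ℝ B] [PosSMulMono ℝ B]
    (hAcomplete : ∀ J : Set A, J.Nonempty → DirectedOn (· ≤ ·) J → BddAbove J →
      ∃ s, IsLUB J s)
    (hBcomplete : ∀ J : Set B, J.Nonempty → DirectedOn (· ≤ ·) J → BddAbove J →
      ∃ s, IsLUB J s)
    (ψ : A →ₗ[ℝ] ℝ)
    (hψpos : ∀ a : A, 0 ≤ a → 0 ≤ ψ a)
    (hψfaith : ∀ a : A, 0 ≤ a → a ≠ 0 → 0 < ψ a)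
    (φ : A →ₗ[ℝ] B)
    (hφpos : ∀ a : A, 0 ≤ a → 0 ≤ φ a)
    (hφseqnormal : ∀ f : ℕ → A, Monotone f → BddAbove (Set.range f) →
      ∀ s : A, IsLUB (Set.range f) s → IsLUB (Set.range fun n => φ (f n)) (φ s)) :
    ∀ J : Set A, J.Nonempty → DirectedOn (· ≤ ·) J → BddAbove J →
      ∀ s : A, IsLUB J s → IsLUB (φ '' J) (φ s) := by
  intro J hJne hJdir hJbdd s hs
  classical
  have hψmono : ∀ {x y : A}, x ≤ y → ψ x ≤ ψ y := by
    intro x y hxy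
    have h := hψpos (y - x) (sub_nonneg.2 hxy)
    rw [map_sub] at h
    linarith
  set c := sSup (ψ '' J) with hc
  have hbdd : BddAbove (ψ '' J) := by
    refine ⟨ψ s, ?_⟩
    rintro _ ⟨j, hj, rfl⟩
    exact hψmono (hs.1 hj)
  have hne : (ψ '' J).Nonempty := hJne.image _
  have hψleC : ∀ j ∈ J, ψ j ≤ c := fun j hj => le_csSup hbdd ⟨j, hj, rfl⟩
  -- choose kₙ ∈ J with ψ kₙ > c - (1/2)^n
  have hk : ∀ n : ℕ, ∃ j ∈ J, c - (1/2 : ℝ)^n < ψ j := by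
    intro n
    have hlt : c - (1/2 : ℝ)^n < c := by
      have : (0:ℝ) < (1/2 : ℝ)^n := by positivity
      linarith
    obtain ⟨x, hx, hxl⟩ := exists_lt_of_lt_csSup hne hlt
    obtain ⟨j, hj, rfl⟩ := hx
    exact ⟨j, hj, hxl⟩
  choose k hkJ hklt using hk
  -- build an increasing sequence in J dominating the kₙ
  have step : ∀ (n : ℕ) (j : A), j ∈ J → ∃ z ∈ J, j ≤ z ∧ k (n+1) ≤ z :=
    fun n j hj => hJdir j hj (k (n+1)) (hkJ _)
  let F : ℕ → {a : A // a ∈ J} := fun n =>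
    Nat.rec ⟨k 0, hkJ 0⟩
      (fun n p => ⟨(step n p.1 p.2).choose, (step n p.1 p.2).choose_spec.1⟩) n
  set f : ℕ → A := fun n => (F n).1 with hf
  have hfJ : ∀ n, f n ∈ J := fun n => (F n).2
  have hfsucc : ∀ n, f n ≤ f (n+1) ∧ k (n+1) ≤ f (n+1) := by
    intro n
    exact ⟨(step n (F n).1 (F n).2).choose_spec.2.1,
      (step n (F n).1 (F n).2).choose_spec.2.2⟩
  have hfmono : Monotone f := monotone_nat_of_le_succ (fun n => (hfsucc n).1)
  have hflt : ∀ n, c - (1/2 : ℝ)^n < ψ (f n) := by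
    intro n
    cases n with
    | zero => exact hklt 0
    | succ m => exact lt_of_lt_of_le (hklt (m+1)) (hψmono (hfsucc m).2)
  have hfbdd : BddAbove (Set.range f) := by
    refine ⟨s, ?_⟩
    rintro _ ⟨n, rfl⟩
    exact hs.1 (hfJ n)
  have hfdir : DirectedOn (· ≤ ·) (Set.range f) := by
    rintro _ ⟨m, rfl⟩ _ ⟨n, rfl⟩
    exact ⟨f (max m n), ⟨max m n, rfl⟩, hfmono (le_max_left m n),
      hfmono (le_max_right m n)⟩
  obtain ⟨t, ht⟩ := hAcomplete (Set.range f) ⟨f 0, 0, rfl⟩ hfdir hfbdd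
  -- t is an upper bound of J
  have htub : ∀ j ∈ J, j ≤ t := by
    intro j hj
    have ha0 : (0:A) ≤ (j - t)⁺ := le_sup_right
    have haψn : ∀ n : ℕ, ψ ((j - t)⁺) ≤ (1/2 : ℝ)^n := by
      intro n
      have h1 : (j - t)⁺ ≤ (j - f n)⁺ := by
        apply sup_le_sup_right
        have : f n ≤ t := ht.1 ⟨n, rfl⟩
        exact sub_le_sub_left this j
      have h2 : (j - f n)⁺ + f n = j ⊔ f n := by
        rw [posPart_def, sup_add, sub_add_cancel, zero_add]
      obtain ⟨z, hzJ, hjz, hfz⟩ := hJdir j hj (f n) (hfJ n)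
      have h3 : ψ (j ⊔ f n) ≤ c := le_trans (hψmono (sup_le hjz hfz)) (hψleC z hzJ)
      have h4 : ψ ((j - f n)⁺) + ψ (f n) ≤ c := by
        rw [← map_add, h2]; exact h3
      have h5 := hψmono h1
      have h6 := hflt n
      linarith
    have haψ0 : ψ ((j - t)⁺) ≤ 0 := by
      by_contra h
      push_neg at h
      obtain ⟨n, hn⟩ := exists_pow_lt_of_lt_one h (by norm_num : (1/2:ℝ) < 1)
      exact absurd (haψn n) (not_le.2 hn)
    have ha : (j - t)⁺ = 0 := by
      by_contra h
      exact absurd (hψfaith _ ha0 h) (not_lt.2 haψ0)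
    exact sub_nonpos.1 (posPart_eq_zero.1 ha)
  -- hence t = s
  have hts : t = s := by
    apply le_antisymm
    · apply ht.2
      rintro _ ⟨n, rfl⟩
      exact hs.1 (hfJ n)
    · exact hs.2 htub
  have hs' : IsLUB (Set.range f) s := hts ▸ ht
  have hLUB := hφseqnormal f hfmono hfbdd s hs'
  constructor
  · rintro _ ⟨j, hj, rfl⟩
    have h := hφpos (s - j) (sub_nonneg.2 (hs.1 hj))
    rw [map_sub] at h
    exact sub_nonneg.1 h
  · intro u hu
    apply hLUB.2
    rintro _ ⟨n, rfl⟩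
    exact hu ⟨f n, hfJ n, rfl⟩
end

section
/- Let W be a monotone sequentially complete vector lattice with a faithful positive linear functional ψ, and suppose ψ is sequentially normal. Then ψ is normal: for every nonempty upper bounded upward directed subset J of W, ψ(sup J) = sup_{j∈J} ψ(j). -/
/-!
Directedness lets us pick a monotone sequence `f n` in `J` with `ψ (f n) ↑ sup ψ(J)`; by sequential
normality its supremum `s` satisfies `ψ s = sup ψ(J)`. For `x ∈ J` the sequence `f n ⊔ x` is
dominated termwise by elements of `J`, so its supremum `t ≥ s` has `ψ t ≤ ψ s`; faithfulness makes
`ψ` strictly monotone, forcing `t = s` and hence `x ≤ s`.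
-/

open Set

theorem strictMono_of_map_pos_of_ne_zero {W F : Type*} [AddCommGroup W] [PartialOrder W]
    [AddLeftMono W] [FunLike F W ℝ] [AddMonoidHomClass F W ℝ] (ψ : F)
    (hψ : ∀ a : W, 0 ≤ a → a ≠ 0 → 0 < ψ a) : StrictMono ψ := fun x y hxy => by
  have := hψ (y - x) (sub_nonneg.2 hxy.le) (sub_ne_zero.2 hxy.ne')
  rwa [map_sub, sub_pos] at this

theorem DirectedOn.exists_monotone_seq_ge_s11 {α : Type*} [Preorder α] {J : Set α}
    (hJ : DirectedOn (· ≤ ·) J) {k : ℕ → α} (hk : ∀ n, k n ∈ J) :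
    ∃ f : ℕ → α, Monotone f ∧ (∀ n, f n ∈ J) ∧ ∀ n, k n ≤ f n := by
  choose next hnextJ hle_next hk_next using fun (x : J) (n : ℕ) => hJ x x.2 (k n) (hk n)
  let F : ℕ → J := fun n => Nat.rec ⟨k 0, hk 0⟩ (fun n x => ⟨next x (n + 1), hnextJ x _⟩) n
  refine ⟨Subtype.val ∘ F, monotone_nat_of_le_succ fun n => hle_next _ _, fun n => (F n).2, ?_⟩
  rintro (_ | n)
  exacts [le_rfl, hk_next _ _]

theorem DirectedOn.exists_monotone_seq_ciSup_eq {α : Type*} [Preorder α] {g : α → ℝ}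
    (hg : Monotone g) {J : Set α} (hJ : DirectedOn (· ≤ ·) J) (hne : J.Nonempty)
    (hbdd : BddAbove (g '' J)) :
    ∃ f : ℕ → α, Monotone f ∧ (∀ n, f n ∈ J) ∧ ⨆ n, g (f n) = sSup (g '' J) := by
  obtain ⟨u, -, hu_lim, hu_mem⟩ := exists_seq_tendsto_sSup (hne.image g) hbdd
  choose k hkJ hku using hu_mem
  obtain ⟨f, hf, hfJ, hkf⟩ := hJ.exists_monotone_seq_ge_s11 hkJ
  have hgf_le : ∀ n, g (f n) ≤ sSup (g '' J) := fun n => le_csSup hbdd (mem_image_of_mem g (hfJ n))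
  have hgf_bdd : BddAbove (range (g ∘ f)) := ⟨_, forall_mem_range.2 hgf_le⟩
  refine ⟨f, hf, hfJ, le_antisymm (ciSup_le hgf_le) (le_of_tendsto' hu_lim fun n => ?_)⟩
  calc u n = g (k n) := (hku n).symm
    _ ≤ g (f n) := hg (hkf n)
    _ ≤ ⨆ n, g (f n) := le_ciSup hgf_bdd n

theorem DirectedOn.isLUB_of_isLUB_seq {W : Type*} [Lattice W] {g : W → ℝ} (hg : StrictMono g)
    (hseq : ∀ f : ℕ → W, Monotone f → BddAbove (range f) → ∃ s, IsLUB (range f) s)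
    (hnormal : ∀ f : ℕ → W, Monotone f → BddAbove (range f) →
      ∀ s : W, IsLUB (range f) s → (⨆ n, g (f n)) = g s)
    {J : Set W} (hJ : DirectedOn (· ≤ ·) J) (hbdd : BddAbove J)
    {f : ℕ → W} (hf : Monotone f) (hfJ : ∀ n, f n ∈ J) {s : W} (hs : IsLUB (range f) s)
    (hgs : ∀ x ∈ J, g x ≤ g s) : IsLUB J s := by
  refine ⟨fun x hx => ?_, fun u hu => hs.2 (forall_mem_range.2 fun n => hu (hfJ n))⟩
  obtain ⟨b, hb⟩ := hbdd
  have hv : Monotone (fun n => f n ⊔ x) := fun m n hmn => sup_le_sup_right (hf hmn) x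
  have hv_bdd : BddAbove (range fun n => f n ⊔ x) :=
    ⟨b, forall_mem_range.2 fun n => sup_le (hb (hfJ n)) (hb hx)⟩
  obtain ⟨t, ht⟩ := hseq _ hv hv_bdd
  have hgt : g t ≤ g s := by
    rw [← hnormal _ hv hv_bdd t ht]
    refine ciSup_le fun n => ?_
    obtain ⟨z, hzJ, hfz, hxz⟩ := hJ (f n) (hfJ n) x hx
    exact (hg.monotone (sup_le hfz hxz)).trans (hgs z hzJ)
  have hst : s ≤ t := hs.2 (forall_mem_range.2 fun n => le_sup_left.trans (ht.1 ⟨n, rfl⟩))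
  have hts : t = s := (hst.eq_or_lt.resolve_right fun h => (hg h).not_ge hgt).symm
  exact hts ▸ le_sup_right.trans (ht.1 ⟨0, rfl⟩)

theorem stmt_11_general {W : Type*} [Lattice W] [AddCommGroup W] [Module ℝ W]
    [CovariantClass W W (· + ·) (· ≤ ·)]
    (ψ : W →ₗ[ℝ] ℝ)
    (hψfaith : ∀ a : W, 0 ≤ a → a ≠ 0 → 0 < ψ a)
    (hseq : ∀ f : ℕ → W, Monotone f → BddAbove (Set.range f) →
      ∃ s, IsLUB (Set.range f) s)
    (hψseqnormal : ∀ f : ℕ → W, Monotone f → BddAbove (Set.range f) →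
      ∀ s : W, IsLUB (Set.range f) s → (⨆ n, ψ (f n)) = ψ s) :
    ∀ J : Set W, J.Nonempty → DirectedOn (· ≤ ·) J → BddAbove J →
      ∃ s : W, IsLUB J s ∧ ψ s = sSup (ψ '' J) := by
  intro J hne hJ hbdd
  have hψ : StrictMono ψ := strictMono_of_map_pos_of_ne_zero ψ hψfaith
  have hψJ_bdd : BddAbove (ψ '' J) := hψ.monotone.map_bddAbove hbdd
  obtain ⟨f, hf, hfJ, hψf⟩ := hJ.exists_monotone_seq_ciSup_eq hψ.monotone hne hψJ_bdd
  have hf_bdd : BddAbove (range f) := hbdd.mono (range_subset_iff.2 hfJ)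
  obtain ⟨s, hs⟩ := hseq f hf hf_bdd
  have hψs : ψ s = sSup (ψ '' J) := by rw [← hψseqnormal f hf hf_bdd s hs, hψf]
  refine ⟨s, hJ.isLUB_of_isLUB_seq hψ hseq hψseqnormal hbdd hf hfJ hs fun x hx => ?_, hψs⟩
  exact hψs ▸ le_csSup hψJ_bdd (mem_image_of_mem ψ hx)

/-- In a monotone sequentially complete vector lattice, a faithful sequentially
normal positive linear functional is normal. -/
theorem stmt_11 {W : Type*} [Lattice W] [AddCommGroup W] [Module ℝ W]
    [CovariantClass W W (· + ·) (· ≤ ·)] [PosSMulMono ℝ W]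
    (ψ : W →ₗ[ℝ] ℝ)
    (hψpos : ∀ a : W, 0 ≤ a → 0 ≤ ψ a)
    (hψfaith : ∀ a : W, 0 ≤ a → a ≠ 0 → 0 < ψ a)
    (hseq : ∀ f : ℕ → W, Monotone f → BddAbove (Set.range f) →
      ∃ s, IsLUB (Set.range f) s)
    (hψseqnormal : ∀ f : ℕ → W, Monotone f → BddAbove (Set.range f) →
      ∀ s : W, IsLUB (Set.range f) s → (⨆ n, ψ (f n)) = ψ s) :
    ∀ J : Set W, J.Nonempty → DirectedOn (· ≤ ·) J → BddAbove J →
      ∃ s : W, IsLUB J s ∧ ψ s = sSup (ψ '' J) :=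
  stmt_11_general ψ hψfaith hseq hψseqnormal
end

section
/- Let W be a vector lattice and ψ a faithful positive linear functional on W. If (jₙ) is an increasing sequence in W possessing a supremum j₀, and j ∈ W is such that for every n there exists gₙ ∈ W with gₙ ≥ jₙ and gₙ ≥ j and ψ(gₙ) − ψ(jₙ) → 0, then j ≤ j₀. -/
/-- In a vector lattice with a faithful positive linear functional `ψ`: if
`(jₙ)` is increasing with least upper bound `j₀`, and `j` is such that for each
`n` there is `gₙ ≥ jₙ`, `gₙ ≥ j` with `ψ(gₙ - jₙ) → 0`, then `j ≤ j₀`. -/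
theorem stmt_16 {W : Type*} [Lattice W] [AddCommGroup W] [Module ℝ W]
    [CovariantClass W W (· + ·) (· ≤ ·)] [PosSMulMono ℝ W]
    (ψ : W →ₗ[ℝ] ℝ)
    (hψpos : ∀ a : W, 0 ≤ a → 0 ≤ ψ a)
    (hψfaith : ∀ a : W, 0 ≤ a → a ≠ 0 → 0 < ψ a)
    (jn : ℕ → W) (hmono : Monotone jn)
    (j₀ : W) (hlub : IsLUB (Set.range jn) j₀)
    (j : W) (g : ℕ → W)
    (hg₁ : ∀ n, jn n ≤ g n) (hg₂ : ∀ n, j ≤ g n)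
    (hg₃ : Filter.Tendsto (fun n => ψ (g n - jn n)) Filter.atTop (nhds 0)) :
    j ≤ j₀ := by
  set a : W := (j - j₀) ⊔ 0 with ha
  have ha0 : 0 ≤ a := le_sup_right
  have hmonoψ : ∀ x y : W, x ≤ y → ψ x ≤ ψ y := by
    intro x y hxy
    have := hψpos (y - x) (sub_nonneg.mpr hxy)
    rw [map_sub] at this
    linarith
  have key : ∀ n, ψ a ≤ ψ (g n - jn n) := by
    intro n
    apply hmonoψ
    have h1 : jn n ≤ j₀ := hlub.1 ⟨n, rfl⟩
    have h2 : j - j₀ ≤ g n - jn n := sub_le_sub (hg₂ n) h1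
    have h3 : (0 : W) ≤ g n - jn n := sub_nonneg.mpr (hg₁ n)
    exact sup_le h2 h3
  have hle : ψ a ≤ 0 :=
    le_of_tendsto_of_tendsto tendsto_const_nhds hg₃
      (Filter.Eventually.of_forall key)
  have heq : ψ a = 0 := le_antisymm hle (hψpos a ha0)
  have haz : a = 0 := by
    by_contra h
    exact absurd heq (ne_of_gt (hψfaith a ha0 h))
  have : j - j₀ ≤ 0 := by
    have := sup_eq_right.mp haz
    exact this
  exact sub_nonpos.mp this
end
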